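/- Stationary distribution identity: for n ≥ 2, 1 ≤ ℓ ≤ n-1, with z_k := e^{(2πi/n)((n-ℓ+1)/2+k-1)} and distinct h₁,...,h_ℓ ∈ {0,...,n-1}, the determinant of the ℓ×ℓ Hermitian matrix K with K(j,k) = (1/n) Σ_{m=1}^ℓ z_m^{h_j - h_k} equals n^{-ℓ} · Δ(h)², where Δ(h) = ∏_{1 ≤ j < k ≤ ℓ} |e^{2πi h_k/n} - e^{2πi h_j/n}|. In particular, summed over all subsets {h₁,...,h_ℓ} ⊆ ℤ/nℤ of size ℓ, these values define a probability distribution. -/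

import Mathlib

/-- `z_k = e^{(2πi/n)((n-ℓ+1)/2 + k)}`, `k = 0,…,ℓ-1`. -/
noncomputable def rootL (n ℓ : ℕ) (k : Fin ℓ) : ℂ :=
  Complex.exp ((2 * Real.pi * Complex.I / n) * (((n : ℂ) - (ℓ : ℂ) + 1) / 2 + (k : ℂ)))

/-!
Put `ζ = e^{2πi/n}`. Since `z_m = e^{πi(n-ℓ+1)/n} ζ^m`, the matrix `A(j, m) = z_m^{h_j}` is the
Vandermonde matrix of the points `ζ^{h_j}` with rows scaled by unimodular factors, and
`K = (1/n) A Aᴴ`; hence `det K = n^{-ℓ} |det A|² = n^{-ℓ} Δ(h)²`.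

For the normalisation let `V(i, a) = ζ^{a i}` (`i < ℓ`, `a ∈ ℤ/n`). Andréief's identity, i.e. the
Cauchy–Binet formula summed over all maps `f : Fin ℓ → ℤ/n`, gives
`∑_f |det V_f|² = ℓ! det (V Vᴴ)`. Non-injective `f` contribute nothing and each `ℓ`-subset `S` is
the image of exactly `ℓ!` injective maps, each contributing `Δ(S)²`; so `∑_S Δ(S)² = det (V Vᴴ)`.
Finally `V Vᴴ = n · 1` by orthogonality of the characters `a ↦ ζ^{a i}`, `i < ℓ ≤ n`.
-/

open Finset Matrix Equiv

namespace Finset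

theorem offDiag_map {α β : Type*} [DecidableEq α] [DecidableEq β] (e : α ↪ β) (s : Finset α) :
    (s.map e).offDiag = s.offDiag.map (e.prodMap e) := by
  ext ⟨a, b⟩
  simp only [mem_offDiag, mem_map, Prod.exists, Function.Embedding.coe_prodMap, Prod.map,
    Prod.mk.injEq]
  grind [e.injective.eq_iff]

variable {ι M : Type*} [Fintype ι] [CommMonoid M]

theorem prod_filter_lt_eq_prod_prod_Ioi [LinearOrder ι] [LocallyFiniteOrderTop ι]
    (F : ι → ι → M) :
    ∏ p ∈ univ.filter (fun p : ι × ι => p.1 < p.2), F p.1 p.2 = ∏ i, ∏ j ∈ Ioi i, F i j := by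
  rw [prod_filter, Fintype.prod_prod_type]
  refine prod_congr rfl fun i _ => ?_
  rw [← prod_filter]
  congr 1
  ext j
  simp

theorem prod_offDiag_eq_sq_prod_filter_lt [LinearOrder ι] (F : ι → ι → M)
    (hF : ∀ i j, F i j = F j i) :
    ∏ p ∈ univ.offDiag, F p.1 p.2
      = (∏ p ∈ univ.filter (fun p : ι × ι => p.1 < p.2), F p.1 p.2) ^ 2 := by
  rw [← prod_filter_mul_prod_filter_not univ.offDiag (fun p => p.1 < p.2), sq]
  congr 1
  · congr 1
    ext p
    simpa using ne_of_lt
  · refine prod_equiv (Equiv.prodComm ι ι) (fun p => ?_) (fun p _ => hF _ _)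
    simp only [mem_filter, mem_offDiag, mem_univ, true_and, prodComm_apply, Prod.fst_swap,
      Prod.snd_swap]
    exact ⟨fun ⟨hne, hnlt⟩ => lt_of_le_of_ne (not_lt.mp hnlt) hne.symm,
      fun h => ⟨h.ne', h.not_gt⟩⟩

theorem card_filter_injective_image_eq_factorial [DecidableEq ι] {ℓ : ℕ} {T : Finset ι}
    (hT : #T = ℓ) :
    #{f : Fin ℓ → ι | Function.Injective f ∧ univ.image f = T} = ℓ.factorial := by
  have hcard : Fintype.card T = Fintype.card (Fin ℓ) := by simp [hT]
  rw [card_eq_of_equiv_fintype (β := Fin ℓ ≃ T) ?_,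
    Fintype.card_equiv (Fintype.equivOfCardEq hcard.symm), Fintype.card_fin]
  exact {
    toFun := fun f => Equiv.ofBijective
      (fun i => ⟨f.1 i, (mem_filter.mp f.2).2.2.subset (mem_image_of_mem _ (mem_univ i))⟩)
      ((Fintype.bijective_iff_injective_and_card _).mpr
        ⟨fun i j h => (mem_filter.mp f.2).2.1 (congrArg Subtype.val h), hcard.symm⟩)
    invFun := fun e => ⟨fun i => e i, by
      refine mem_filter.mpr ⟨mem_univ _, Subtype.val_injective.comp e.injective, ?_⟩
      ext x
      simp only [mem_image, mem_univ, true_and]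
      exact ⟨by rintro ⟨i, rfl⟩; exact (e i).2, fun hx => ⟨e.symm ⟨x, hx⟩, by simp⟩⟩⟩
    left_inv := fun f => rfl
    right_inv := fun e => by ext; rfl }

theorem sum_filter_injective_image_eq_factorial_smul {A : Type*} [DecidableEq ι]
    [AddCommMonoid A] (ℓ : ℕ) (G : Finset ι → A) :
    ∑ f : Fin ℓ → ι with Function.Injective f, G (univ.image f)
      = ℓ.factorial • ∑ T ∈ powersetCard ℓ univ, G T := by
  have hmaps : ∀ f ∈ ({f | Function.Injective f} : Finset (Fin ℓ → ι)),
      univ.image f ∈ powersetCard ℓ univ := fun f hf => by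
    rw [mem_powersetCard, card_image_of_injective _ (mem_filter.mp hf).2]
    simp
  rw [← sum_fiberwise_of_maps_to hmaps, smul_sum]
  refine sum_congr rfl fun T hT => ?_
  rw [sum_congr rfl fun f hf => congrArg G (mem_filter.mp hf).2, sum_const, filter_filter,
    card_filter_injective_image_eq_factorial (mem_powersetCard.mp hT).2]

end Finset

namespace Matrix

section CauchyBinet

variable {m n R : Type*} [Fintype m] [DecidableEq m] [Fintype n] [CommRing R]

theorem det_mul_eq_sum_det_submatrix_mul_prod (P : Matrix m n R) (Q : Matrix n m R) :
    det (P * Q) = ∑ f : m → n, det (P.submatrix id f) * ∏ i, Q (f i) i := by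
  simp only [det_apply', mul_apply, prod_univ_sum, Fintype.piFinset_univ, submatrix_apply, id,
    sum_mul, mul_sum]
  rw [sum_comm]
  refine sum_congr rfl fun f _ => sum_congr rfl fun σ _ => ?_
  rw [prod_mul_distrib, mul_assoc]

/-- Andréief's identity. -/
theorem sum_det_submatrix_mul_det_submatrix (P : Matrix m n R) (Q : Matrix n m R) :
    ∑ f : m → n, det (P.submatrix id f) * det (Q.submatrix f id)
      = (Fintype.card m).factorial * det (P * Q) := by
  have hperm : ∀ σ : Perm m, ∑ f : m → n,
      det (P.submatrix id f) * ((Perm.sign σ : ℤ) * ∏ i, Q (f (σ i)) i) = det (P * Q) := by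
    intro σ
    rw [det_mul_eq_sum_det_submatrix_mul_prod, ← (arrowCongr σ (Equiv.refl n)).sum_comp]
    refine sum_congr rfl fun g _ => ?_
    have hg : P.submatrix id (arrowCongr σ (Equiv.refl n) g)
        = (P.submatrix id g).submatrix id σ.symm := rfl
    rw [hg, det_permute', Perm.sign_symm]
    simp only [arrowCongr_apply, Function.comp_apply, Equiv.refl_apply, Equiv.symm_apply_apply]
    rw [mul_mul_mul_comm, ← Int.cast_mul, ← Units.val_mul, Int.units_mul_self, Units.val_one,
      Int.cast_one, one_mul]
  simp_rw [det_apply' (Q.submatrix _ _), submatrix_apply, id, mul_sum]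
  rw [sum_comm]
  simp_rw [hperm, sum_const, card_univ, Fintype.card_perm, nsmul_eq_mul]

end CauchyBinet

theorem norm_det_vandermonde {𝕜 : Type*} [NormedField 𝕜] {ℓ : ℕ} (v : Fin ℓ → 𝕜) :
    ‖det (vandermonde v)‖
      = ∏ p ∈ univ.filter (fun p : Fin ℓ × Fin ℓ => p.1 < p.2), ‖v p.2 - v p.1‖ := by
  simp_rw [det_vandermonde, norm_prod, prod_filter_lt_eq_prod_prod_Ioi (fun i j => ‖v j - v i‖)]

theorem sq_norm_det_vandermonde {𝕜 : Type*} [NormedField 𝕜] {ℓ : ℕ} (v : Fin ℓ → 𝕜) :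
    ‖det (vandermonde v)‖ ^ 2 = ∏ p ∈ univ.offDiag, ‖v p.2 - v p.1‖ := by
  rw [norm_det_vandermonde,
    prod_offDiag_eq_sq_prod_filter_lt (fun i j => ‖v j - v i‖) fun i j => norm_sub_rev _ _]

theorem sum_sq_norm_det_vandermonde_comp_eq_sum_powersetCard {ι 𝕜 : Type*} [Fintype ι]
    [DecidableEq ι] [NormedField 𝕜] (ℓ : ℕ) (v : ι → 𝕜) :
    ∑ f : Fin ℓ → ι, ‖det (vandermonde (v ∘ f))‖ ^ 2
      = ℓ.factorial * ∑ T ∈ powersetCard ℓ univ, ∏ q ∈ T.offDiag, ‖v q.2 - v q.1‖ := by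
  have hinj : ∀ f : Fin ℓ → ι, Function.Injective f → ‖det (vandermonde (v ∘ f))‖ ^ 2
      = ∏ q ∈ (univ.image f).offDiag, ‖v q.2 - v q.1‖ := fun f hf => by
    rw [sq_norm_det_vandermonde,
      show univ.image f = univ.map ⟨f, hf⟩ from (map_eq_image ⟨f, hf⟩ univ).symm, offDiag_map,
      prod_map]
    rfl
  have hnoninj : ∀ f : Fin ℓ → ι, ¬ Function.Injective f →
      ‖det (vandermonde (v ∘ f))‖ ^ 2 = 0 := fun f hf => by
    obtain ⟨i, j, hfij, hij⟩ := Function.not_injective_iff.mp hf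
    rw [sq_norm_det_vandermonde]
    exact prod_eq_zero (i := (i, j)) (by simp [hij]) (by simp [hfij])
  rw [← sum_filter_of_ne fun f _ h => not_imp_comm.mp (hnoninj f) h,
    sum_congr rfl fun f hf => hinj f (mem_filter.mp hf).2,
    sum_filter_injective_image_eq_factorial_smul ℓ fun T => ∏ q ∈ T.offDiag, ‖v q.2 - v q.1‖,
    nsmul_eq_mul]

def powerMatrix {ι R : Type*} [Monoid R] (ℓ : ℕ) (v : ι → R) : Matrix (Fin ℓ) ι R :=
  of fun i a => v a ^ (i : ℕ)

theorem sum_sq_norm_det_vandermonde_comp_eq_det {ι : Type*} [Fintype ι] (ℓ : ℕ) (v : ι → ℂ) :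
    ∑ f : Fin ℓ → ι, ((‖det (vandermonde (v ∘ f))‖ ^ 2 : ℝ) : ℂ)
      = ℓ.factorial * det (powerMatrix ℓ v * (powerMatrix ℓ v)ᴴ) := by
  have hV : ∀ f : Fin ℓ → ι, (powerMatrix ℓ v).submatrix id f = (vandermonde (v ∘ f))ᵀ :=
    fun f => rfl
  have h := sum_det_submatrix_mul_det_submatrix (powerMatrix ℓ v) (powerMatrix ℓ v)ᴴ
  rw [Fintype.card_fin] at h
  rw [← h]
  refine sum_congr rfl fun f _ => ?_
  rw [← conjTranspose_submatrix, det_conjTranspose, hV, det_transpose, Complex.star_def,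
    Complex.mul_conj', Complex.ofReal_pow]

theorem det_of_mul_sum_zpow_sub {ι : Type*} [Fintype ι] [DecidableEq ι] (c : ℂ) (z : ι → ℂ)
    (hz : ∀ m, ‖z m‖ = 1) (h : ι → ℕ) :
    det (of fun j k => c * ∑ m, z m ^ ((h j : ℤ) - h k))
      = c ^ Fintype.card ι * ‖det (of fun j m => z m ^ h j)‖ ^ 2 := by
  have hK : of (fun j k => c * ∑ m, z m ^ ((h j : ℤ) - h k))
      = c • (of (fun j m => z m ^ h j) * (of fun j m => z m ^ h j)ᴴ) := by
    ext j k
    simp only [of_apply, Matrix.smul_apply, mul_apply, conjTranspose_apply, smul_eq_mul,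
      Complex.star_def, map_pow, ← Complex.inv_eq_conj (hz _), inv_pow]
    congr 1
    refine sum_congr rfl fun m _ => ?_
    rw [zpow_sub₀ (norm_ne_zero_iff.mp ((hz m).symm ▸ one_ne_zero)), zpow_natCast, zpow_natCast,
      div_eq_mul_inv]
  rw [hK, det_smul, det_mul, det_conjTranspose, Complex.star_def, Complex.mul_conj']

end Matrix

namespace IsPrimitiveRoot

variable {ζ : ℂ} {n : ℕ}

theorem sum_pow_mul_star_pow (hζ : IsPrimitiveRoot ζ n) {i j : ℕ} (hi : i < n) (hj : j < n) :
    ∑ a : Fin n, (ζ ^ (a : ℕ)) ^ i * star ((ζ ^ (a : ℕ)) ^ j)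
      = if i = j then (n : ℂ) else 0 := by
  have hζ0 : ζ ≠ 0 := hζ.ne_zero (by omega)
  set r := ζ ^ ((i : ℤ) - j)
  have hterm : ∀ a : ℕ, (ζ ^ a) ^ i * star ((ζ ^ a) ^ j) = r ^ a := fun a => by
    rw [Complex.star_def, ← Complex.inv_eq_conj (by simp [hζ.norm'_eq_one (by omega)]),
      ← zpow_natCast (ζ ^ a) i, ← zpow_natCast (ζ ^ a) j, ← _root_.zpow_neg,
      ← zpow_add₀ (pow_ne_zero _ hζ0), ← zpow_natCast ζ a, ← _root_.zpow_mul, ← zpow_natCast r,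
      ← _root_.zpow_mul]
    ring_nf
  simp_rw [hterm]
  rw [Fin.sum_univ_eq_sum_range (fun a => r ^ a)]
  split_ifs with hij
  · simp [r, hij]
  · have hr1 : r ≠ 1 := by
      rw [Ne, hζ.zpow_eq_one_iff_dvd]
      intro hd
      have := Int.eq_zero_of_abs_lt_dvd hd (by rw [abs_lt]; omega)
      omega
    have hrn : r ^ n = 1 := by
      rw [← zpow_natCast, ← _root_.zpow_mul, mul_comm, _root_.zpow_mul, zpow_natCast,
        hζ.pow_eq_one, _root_.one_zpow]
    rw [geom_sum_eq hr1, hrn, sub_self, zero_div]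

theorem powerMatrix_mul_conjTranspose (hζ : IsPrimitiveRoot ζ n) {ℓ : ℕ} (hℓ : ℓ ≤ n) :
    powerMatrix ℓ (fun a : Fin n => ζ ^ (a : ℕ)) * (powerMatrix ℓ fun a : Fin n => ζ ^ (a : ℕ))ᴴ
      = (n : ℂ) • 1 := by
  ext i j
  rw [mul_apply, Matrix.smul_apply, one_apply, smul_eq_mul, mul_ite, mul_one, mul_zero]
  simp only [powerMatrix, conjTranspose_apply, of_apply]
  rw [hζ.sum_pow_mul_star_pow (by omega) (by omega)]
  exact if_congr Fin.val_inj rfl rfl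

theorem sum_powersetCard_prod_offDiag_norm_pow_sub (hζ : IsPrimitiveRoot ζ n) {ℓ : ℕ}
    (hℓ : ℓ ≤ n) :
    ∑ T ∈ powersetCard ℓ (univ : Finset (Fin n)), ∏ q ∈ T.offDiag, ‖ζ ^ (q.2 : ℕ) - ζ ^ (q.1 : ℕ)‖
      = n ^ ℓ := by
  have hsum := sum_sq_norm_det_vandermonde_comp_eq_sum_powersetCard ℓ
    fun a : Fin n => ζ ^ (a : ℕ)
  have hdet := sum_sq_norm_det_vandermonde_comp_eq_det ℓ fun a : Fin n => ζ ^ (a : ℕ)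
  rw [hζ.powerMatrix_mul_conjTranspose hℓ, det_smul, det_one, Fintype.card_fin, mul_one] at hdet
  refine mul_left_cancel₀ (Nat.cast_ne_zero.mpr ℓ.factorial_ne_zero : (ℓ.factorial : ℝ) ≠ 0) ?_
  rw [← hsum]
  exact_mod_cast hdet

end IsPrimitiveRoot

theorem Complex.exp_two_pi_mul_I_mul_div_eq_pow (n a : ℕ) :
    exp (2 * Real.pi * I * a / n) = exp (2 * Real.pi * I / n) ^ a := by
  rw [← exp_nat_mul]
  ring_nf

theorem rootL_eq (n ℓ : ℕ) (m : Fin ℓ) :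
    rootL n ℓ m = Complex.exp (↑(Real.pi * (n - ℓ + 1) / n) * Complex.I)
      * Complex.exp (2 * Real.pi * Complex.I / n) ^ (m : ℕ) := by
  rw [rootL, ← Complex.exp_nat_mul, ← Complex.exp_add]
  push_cast
  ring_nf

theorem norm_rootL (n ℓ : ℕ) (m : Fin ℓ) : ‖rootL n ℓ m‖ = 1 := by
  rw [rootL]
  convert Complex.norm_exp_ofReal_mul_I (2 * Real.pi / n * ((n - ℓ + 1) / 2 + m)) using 3
  push_cast
  ring

theorem norm_det_rootL_pow (n ℓ : ℕ) (h : Fin ℓ → ℕ) :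
    ‖det (of fun j m => rootL n ℓ m ^ h j)‖
      = ‖det (vandermonde fun j => Complex.exp (2 * Real.pi * Complex.I / n) ^ h j)‖ := by
  have hA : of (fun j m => rootL n ℓ m ^ h j) = of fun j m =>
      Complex.exp (↑(Real.pi * (n - ℓ + 1) / n) * Complex.I) ^ h j
        * vandermonde (fun j => Complex.exp (2 * Real.pi * Complex.I / n) ^ h j) j m := by
    ext j m
    rw [of_apply, of_apply, vandermonde_apply, rootL_eq, mul_pow, ← pow_mul, ← pow_mul,
      mul_comm (m : ℕ)]
  simp only [hA, det_mul_column, norm_mul, norm_prod, norm_pow, Complex.norm_exp_ofReal_mul_I,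
    one_pow, prod_const_one, one_mul]

theorem stationary_distribution_identity_general (n ℓ : ℕ) (hn : 2 ≤ n)
    (hℓn : ℓ ≤ n - 1) (h : Fin ℓ → ℕ) :
    Matrix.det (Matrix.of fun j k : Fin ℓ =>
        (1 / (n : ℂ)) * ∑ m : Fin ℓ, rootL n ℓ m ^ ((h j : ℤ) - (h k : ℤ)))
      = (((n : ℝ) ^ (-(ℓ : ℤ)) *
          (∏ p ∈ Finset.univ.filter (fun p : Fin ℓ × Fin ℓ => p.1 < p.2),
            ‖Complex.exp (2 * Real.pi * Complex.I * (h p.2) / n)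
              - Complex.exp (2 * Real.pi * Complex.I * (h p.1) / n)‖) ^ 2 : ℝ) : ℂ) ∧
    ∑ S ∈ (Finset.range n).powersetCard ℓ,
        ((n : ℝ) ^ (-(ℓ : ℤ))) *
          ∏ p ∈ S.offDiag,
            ‖Complex.exp (2 * Real.pi * Complex.I * (p.2 : ℕ) / n)
              - Complex.exp (2 * Real.pi * Complex.I * (p.1 : ℕ) / n)‖ = 1 := by
  have hζ := Complex.isPrimitiveRoot_exp n (by omega)
  simp_rw [Complex.exp_two_pi_mul_I_mul_div_eq_pow]
  constructor
  · rw [det_of_mul_sum_zpow_sub _ _ (norm_rootL n ℓ) h, norm_det_rootL_pow, norm_det_vandermonde,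
      Fintype.card_fin]
    push_cast
    rw [_root_.zpow_neg, zpow_natCast, one_div, inv_pow]
  · rw [← mul_sum, ← Nat.Iio_eq_range, ← Fin.map_valEmbedding_univ, powersetCard_map, sum_map]
    simp only [RelEmbedding.coe_toEmbedding, mapEmbedding_apply, offDiag_map, prod_map,
      Function.Embedding.coe_prodMap, Prod.map_fst, Prod.map_snd, Fin.valEmbedding_apply]
    rw [hζ.sum_powersetCard_prod_offDiag_norm_pow_sub (by omega), _root_.zpow_neg, zpow_natCast,
      inv_mul_cancel₀ (by positivity)]

/-- Stationary distribution identity: `det((1/n) Σ_m z_m^{h_j - h_k}) = n^{-ℓ} Δ(h)²`,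
and summed over all size-`ℓ` subsets of `ℤ/nℤ` these values form a probability
distribution. -/
theorem stationary_distribution_identity (n ℓ : ℕ) (hn : 2 ≤ n) (hℓ1 : 1 ≤ ℓ)
    (hℓn : ℓ ≤ n - 1) (h : Fin ℓ → ℕ) (hinj : Function.Injective h)
    (hlt : ∀ j, h j < n) :
    Matrix.det (Matrix.of fun j k : Fin ℓ =>
        (1 / (n : ℂ)) * ∑ m : Fin ℓ, rootL n ℓ m ^ ((h j : ℤ) - (h k : ℤ)))
      = (((n : ℝ) ^ (-(ℓ : ℤ)) *
          (∏ p ∈ Finset.univ.filter (fun p : Fin ℓ × Fin ℓ => p.1 < p.2),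
            ‖Complex.exp (2 * Real.pi * Complex.I * (h p.2) / n)
              - Complex.exp (2 * Real.pi * Complex.I * (h p.1) / n)‖) ^ 2 : ℝ) : ℂ) ∧
    ∑ S ∈ (Finset.range n).powersetCard ℓ,
        ((n : ℝ) ^ (-(ℓ : ℤ))) *
          ∏ p ∈ S.offDiag,
            ‖Complex.exp (2 * Real.pi * Complex.I * (p.2 : ℕ) / n)
              - Complex.exp (2 * Real.pi * Complex.I * (p.1 : ℕ) / n)‖ = 1 :=
  stationary_distribution_identity_general n ℓ hn hℓn h
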